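/- Let (α_k)_{k≥1} be a sequence of real numbers with α_1 > 0 and α_k > 0 for k ≥ 2, and define residual polynomials by r_0(λ) = 1, r_1(λ) = 1−λ, r_{k+1}(λ) = (1−λ)[r_k(λ) + α_k(r_k(λ) − r_{k−1}(λ))] for k ≥ 1. Let (c_n)_{n≥0} and (d_n)_{n≥1} be real sequences satisfying c_1 c_0 / d_1 = 1 + 1/α_1 and c_k c_{k−1} / d_k = (1 + 1/α_k)(α_{k−1} + 1) for k ≥ 2, and define polynomials P_0(x) = 1, P_1(x) = c_0 x, P_{k+1}(x) = c_k x P_k(x) − d_k P_{k−1}(x) for k ≥ 1. If P_k(1) ≠ 0 for all k, then for every k ≥ 1 and λ ∈ [0,1], r_k(λ) = (1−λ)^{k/2} · P_k(√(1−λ)) / P_k(1). -/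

import Mathlib

/-- Residual polynomials of Nesterov's accelerated Landweber iteration with a general
momentum sequence `α`. -/
noncomputable def nesterovResGen (α : ℕ → ℝ) : ℕ → ℝ → ℝ
  | 0, _ => 1
  | 1, l => 1 - l
  | (k + 2), l =>
      (1 - l) * (nesterovResGen α (k + 1) l +
        α (k + 1) * (nesterovResGen α (k + 1) l - nesterovResGen α k l))

/-- Orthogonal polynomials generated by the three-term recurrence with coefficients `c`, `d`. -/
noncomputable def threeTermPoly (c d : ℕ → ℝ) : ℕ → ℝ → ℝ
  | 0, _ => 1
  | 1, x => c 0 * x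
  | (k + 2), x =>
      c (k + 1) * x * threeTermPoly c d (k + 1) x - d (k + 1) * threeTermPoly c d k x

lemma ttp_rec (c d : ℕ → ℝ) (m : ℕ) (x : ℝ) :
    threeTermPoly c d (m+2) x
      = c (m+1) * x * threeTermPoly c d (m+1) x - d (m+1) * threeTermPoly c d m x := rfl

lemma E_lemma (α : ℕ → ℝ) (hα : ∀ k, 1 ≤ k → 0 < α k)
    (c d : ℕ → ℝ)
    (hcd1 : c 1 * c 0 / d 1 = 1 + 1 / α 1)
    (hcd : ∀ k, 2 ≤ k → c k * c (k - 1) / d k = (1 + 1 / α k) * (α (k - 1) + 1)) :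
    ∀ k, 1 ≤ k → c k * threeTermPoly c d k 1 =
      (1 + 1 / α k) * (d k * threeTermPoly c d (k-1) 1) := by
  intro k hk
  induction k with
  | zero => omega
  | succ n ih =>
    match n, ih with
    | 0, _ =>
      have hα1 := hα 1 le_rfl
      have hd1 : d 1 ≠ 0 := by
        intro h
        rw [h, div_zero] at hcd1
        have : 0 < 1 + 1 / α 1 := by positivity
        linarith
      have h := (div_eq_iff hd1).mp hcd1
      simp only [threeTermPoly]
      ring_nf
      ring_nf at h
      rw [show threeTermPoly c d 0 1 = 1 from rfl]
      linarith
    | (m+1), ih =>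
      have ihE := ih (by omega)
      have hα1 := hα (m+1) (by omega)
      have hα2 := hα (m+2) (by omega)
      -- Q_{m+2} * (α_{m+1} + 1) = c_{m+1} * Q_{m+1}
      have hrec := ttp_rec c d m 1
      set Qm := threeTermPoly c d m 1
      set Q1 := threeTermPoly c d (m+1) 1
      set Q2 := threeTermPoly c d (m+2) 1
      simp only [Nat.add_sub_cancel] at ihE ⊢
      have key : Q2 * (α (m+1) + 1) = c (m+1) * Q1 := by
        rw [hrec]
        have hne : α (m+1) ≠ 0 := ne_of_gt hα1
        field_simp at ihE ⊢
        nlinarith [ihE]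
      have hd2 : d (m+2) ≠ 0 := by
        intro h
        have h2 := hcd (m+2) (by omega)
        rw [show m+2-1 = m+1 by omega] at h2
        rw [h, div_zero] at h2
        have : 0 < (1 + 1 / α (m+2)) * (α (m+1) + 1) := by positivity
        linarith
      have h2 := hcd (m+2) (by omega)
      rw [show m+2-1 = m+1 by omega] at h2
      have h2' := (div_eq_iff hd2).mp h2
      -- goal : c (m+2) * Q2 = (1 + 1/α (m+2)) * (d (m+2) * Q1)
      have hpos : α (m+1) + 1 ≠ 0 := by positivity
      apply mul_right_cancel₀ hpos
      linear_combination c (m+2) * key + Q1 * h2'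

lemma main_aux (α : ℕ → ℝ) (hα : ∀ k, 1 ≤ k → 0 < α k)
    (c d : ℕ → ℝ)
    (hcd1 : c 1 * c 0 / d 1 = 1 + 1 / α 1)
    (hcd : ∀ k, 2 ≤ k → c k * c (k - 1) / d k = (1 + 1 / α k) * (α (k - 1) + 1))
    (hP1 : ∀ k, threeTermPoly c d k 1 ≠ 0)
    (l : ℝ) (hl0 : 0 ≤ l) (hl1 : l ≤ 1) :
    ∀ k, nesterovResGen α k l =
      (Real.sqrt (1 - l))^k *
        (threeTermPoly c d k (Real.sqrt (1 - l)) / threeTermPoly c d k 1) := by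
  set s := Real.sqrt (1 - l) with hs
  have hs2 : s^2 = 1 - l := Real.sq_sqrt (by linarith)
  suffices h : ∀ k, (nesterovResGen α k l =
      s^k * (threeTermPoly c d k s / threeTermPoly c d k 1)) ∧
      (nesterovResGen α (k+1) l =
      s^(k+1) * (threeTermPoly c d (k+1) s / threeTermPoly c d (k+1) 1)) by
    intro k; exact (h k).1
  intro k
  induction k with
  | zero =>
    constructor
    · simp [nesterovResGen, threeTermPoly]
    · have hc0 : c 0 ≠ 0 := by
        have := hP1 1
        simpa [threeTermPoly] using this
      show 1 - l = s^1 * (c 0 * s / (c 0 * 1))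
      rw [← hs2]; field_simp
  | succ n ih =>
    refine ⟨ih.2, ?_⟩
    obtain ⟨ih0, ih1⟩ := ih
    have hα1 := hα (n+1) (by omega)
    have E := E_lemma α hα c d hcd1 hcd (n+1) (by omega)
    rw [show n+1-1 = n by omega] at E
    have hrec := ttp_rec c d n (1 : ℝ)
    set q0 := threeTermPoly c d n 1 with hq0def
    set q1 := threeTermPoly c d (n+1) 1 with hq1def
    set q2 := threeTermPoly c d (n+2) 1 with hq2def
    have hq0 : q0 ≠ 0 := hP1 n
    have hq1 : q1 ≠ 0 := hP1 (n+1)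
    have hq2 : q2 ≠ 0 := hP1 (n+2)
    have hα0 : α (n+1) ≠ 0 := ne_of_gt hα1
    -- derive the two coefficient identities
    have hdQ : d (n+1) * q0 = α (n+1) * q2 := by
      rw [hrec] at *
      field_simp at E ⊢
      nlinarith [E]
    have hcQ : c (n+1) * q1 = (α (n+1) + 1) * q2 := by
      rw [hrec] at *
      field_simp at E ⊢
      nlinarith [E]
    have hc : c (n+1) = (α (n+1) + 1) * q2 / q1 := by
      field_simp; linarith [hcQ]
    have hd' : d (n+1) = α (n+1) * q2 / q0 := by
      field_simp; linarith [hdQ]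
    show (1 - l) * (nesterovResGen α (n+1) l +
        α (n+1) * (nesterovResGen α (n+1) l - nesterovResGen α n l)) =
      s^(n+2) * ((c (n+1) * s * threeTermPoly c d (n+1) s
        - d (n+1) * threeTermPoly c d n s) / q2)
    rw [ih0, ih1, ← hs2, hc, hd']
    field_simp
    ring

theorem nesterov_residual_general (α : ℕ → ℝ) (hα : ∀ k, 1 ≤ k → 0 < α k)
    (c d : ℕ → ℝ)
    (hcd1 : c 1 * c 0 / d 1 = 1 + 1 / α 1)
    (hcd : ∀ k, 2 ≤ k → c k * c (k - 1) / d k = (1 + 1 / α k) * (α (k - 1) + 1))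
    (hP1 : ∀ k, threeTermPoly c d k 1 ≠ 0)
    (k : ℕ) (hk : 1 ≤ k) (l : ℝ) (hl : l ∈ Set.Icc (0 : ℝ) 1) :
    nesterovResGen α k l =
      (1 - l) ^ ((k : ℝ) / 2) *
        (threeTermPoly c d k (Real.sqrt (1 - l)) / threeTermPoly c d k 1) := by
  obtain ⟨hl0, hl1⟩ := hl
  have h1l : (0:ℝ) ≤ 1 - l := by linarith
  have hpow : (1 - l) ^ ((k : ℝ) / 2) = (Real.sqrt (1 - l))^k := by
    rw [show ((k:ℝ)/2) = (1/2) * k by ring, Real.rpow_mul h1l,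
      Real.rpow_natCast, Real.sqrt_eq_rpow]
  rw [hpow]
  exact main_aux α hα c d hcd1 hcd hP1 l hl0 hl1 k
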